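/- arXiv:1609.08460 — 2 statements merged into one kernel-verified Lean document; each statement's English description precedes it below -/
import Mathlib

section
/- Let x ∈ H², y ∈ S²₁ and r > 0. Then the set {z ∈ H² : B(z,x) = −cosh r and B(z,y) = 0} has exactly one element if and only if B(x,y)² = sinh² r. (Geometrically: the geodesic line represented by y is tangent to the circle of radius r centered at x if and only if the distance from x to the line is r, i.e. |B(x,y)| = sinh r.) -/
/-- The Lorentz bilinear form on ℝ³: B(x,y) = −x⁰y⁰ + x¹y¹ + x²y². -/
noncomputable def lorentzB (x y : Fin 3 → ℝ) : ℝ :=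
  -(x 0 * y 0) + x 1 * y 1 + x 2 * y 2

/-- The hyperboloid model H² = {x : B(x,x) = −1, x⁰ > 0}. -/
def hyperboloid : Set (Fin 3 → ℝ) :=
  {x | lorentzB x x = -1 ∧ 0 < x 0}

/-- The de Sitter sphere S²₁ = {x : B(x,x) = 1}. -/
def deSitter : Set (Fin 3 → ℝ) :=
  {x | lorentzB x x = 1}

/-!
Let `b = B(x,y)` and `w = x ⊠ y`, so that `w` is orthogonal to `x` and `y` and `B(w,w) = 1 + b²`.
A point `z` with `B(z,x) = -cosh r` and `B(z,y) = 0` is determined by `g = B(z,w)`, through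
`(1 + b²) z = cosh r • x - b cosh r • y + g • w`, and then `B(z,z) = -1` reads
`g² = sinh² r - b²`; the sheet condition `z⁰ > 0` is automatic because `B(z,x) < 0`.
So the points of the circle on the line correspond to the square roots of `sinh² r - b²`.
-/

open Real

/-- The Lorentz cross product `J (x × y)`, so that `B(z, x ⊠ y) = det (z, x, y)`. -/
noncomputable def lorentzCross (x y : Fin 3 → ℝ) : Fin 3 → ℝ :=
  ![-(x 1 * y 2 - x 2 * y 1), x 2 * y 0 - x 0 * y 2, x 0 * y 1 - x 1 * y 0]

section LorentzForm

variable (x y z t : Fin 3 → ℝ) (a : ℝ)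

lemma lorentzB_comm : lorentzB x y = lorentzB y x := by
  simp only [lorentzB]; ring

lemma lorentzB_add_left : lorentzB (x + y) t = lorentzB x t + lorentzB y t := by
  simp only [lorentzB, Pi.add_apply]; ring

lemma lorentzB_sub_left : lorentzB (x - y) t = lorentzB x t - lorentzB y t := by
  simp only [lorentzB, Pi.sub_apply]; ring

lemma lorentzB_smul_left : lorentzB (a • x) t = a * lorentzB x t := by
  simp only [lorentzB, Pi.smul_apply, smul_eq_mul]; ring

lemma lorentzB_lorentzCross_left : lorentzB (lorentzCross x y) x = 0 := by
  simp [lorentzB, lorentzCross]; ring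

lemma lorentzB_lorentzCross_right : lorentzB (lorentzCross x y) y = 0 := by
  simp [lorentzB, lorentzCross]; ring

lemma lorentzB_lorentzCross_self :
    lorentzB (lorentzCross x y) (lorentzCross x y) =
      lorentzB x y ^ 2 - lorentzB x x * lorentzB y y := by
  simp [lorentzB, lorentzCross]; ring

/-- Orthogonal decomposition of `z` along `x`, `y` and `x ⊠ y`, cleared of the Gram
determinant of `x, y` (which is `-B(x ⊠ y, x ⊠ y)`). -/
lemma lorentz_gram_smul_eq :
    (lorentzB x x * lorentzB y y - lorentzB x y ^ 2) • z =
      (lorentzB y y * lorentzB z x - lorentzB x y * lorentzB z y) • x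
        + (lorentzB x x * lorentzB z y - lorentzB x y * lorentzB z x) • y
        - lorentzB z (lorentzCross x y) • lorentzCross x y := by
  funext i
  fin_cases i <;> simp [lorentzB, lorentzCross] <;> ring

end LorentzForm

lemma pos_of_lorentzB_neg {x z : Fin 3 → ℝ} (hxx : lorentzB x x < 0) (hx0 : 0 < x 0)
    (hzz : lorentzB z z < 0) (hzx : lorentzB z x < 0) : 0 < z 0 := by
  unfold lorentzB at hxx hzz hzx
  by_contra! hz0
  have hsq : (z 1 * x 1 + z 2 * x 2) ^ 2 < (z 0 * x 0) ^ 2 := by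
    nlinarith [sq_nonneg (z 1 * x 2 - z 2 * x 1)]
  have habs := abs_lt_of_sq_lt_sq (a := z 1 * x 1 + z 2 * x 2) (by rwa [neg_sq])
    (by nlinarith : 0 ≤ -(z 0 * x 0))
  linarith [neg_abs_le (z 1 * x 1 + z 2 * x 2)]

lemma existsUnique_sq_eq_iff {a : ℝ} : (∃! g : ℝ, g ^ 2 = a) ↔ a = 0 := by
  constructor
  · rintro ⟨g, rfl, huniq⟩
    simp [neg_eq_self.mp (huniq (-g) (neg_sq g))]
  · rintro rfl
    exact ⟨0, zero_pow two_ne_zero, fun g hg => pow_eq_zero_iff two_ne_zero |>.mp hg⟩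

section CircleLine

variable {x y : Fin 3 → ℝ} (c g : ℝ)

variable (x y) in
noncomputable def circleLinePoint : Fin 3 → ℝ :=
  (1 + lorentzB x y ^ 2)⁻¹ • (c • x - (lorentzB x y * c) • y + g • lorentzCross x y)

lemma lorentzB_circleLinePoint (t : Fin 3 → ℝ) :
    lorentzB (circleLinePoint x y c g) t = (1 + lorentzB x y ^ 2)⁻¹ *
      (c * lorentzB x t - lorentzB x y * c * lorentzB y t + g * lorentzB (lorentzCross x y) t) := by
  simp only [circleLinePoint, lorentzB_smul_left, lorentzB_add_left, lorentzB_sub_left]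

lemma lorentzB_circleLinePoint_center (hxx : lorentzB x x = -1) :
    lorentzB (circleLinePoint x y c g) x = -c := by
  rw [lorentzB_circleLinePoint, hxx, lorentzB_comm y x, lorentzB_lorentzCross_left]
  field_simp
  ring

lemma lorentzB_circleLinePoint_line (hyy : lorentzB y y = 1) :
    lorentzB (circleLinePoint x y c g) y = 0 := by
  rw [lorentzB_circleLinePoint, hyy, lorentzB_lorentzCross_right]
  ring

lemma lorentzB_circleLinePoint_lorentzCross (hxx : lorentzB x x = -1) (hyy : lorentzB y y = 1) :
    lorentzB (circleLinePoint x y c g) (lorentzCross x y) = g := by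
  rw [lorentzB_circleLinePoint, lorentzB_comm x (lorentzCross x y),
    lorentzB_comm y (lorentzCross x y), lorentzB_lorentzCross_left, lorentzB_lorentzCross_right,
    lorentzB_lorentzCross_self, hxx, hyy]
  field_simp
  ring

lemma lorentzB_circleLinePoint_self (hxx : lorentzB x x = -1) (hyy : lorentzB y y = 1)
    (hg : g ^ 2 = c ^ 2 - 1 - lorentzB x y ^ 2) :
    lorentzB (circleLinePoint x y c g) (circleLinePoint x y c g) = -1 := by
  set z := circleLinePoint x y c g
  rw [lorentzB_circleLinePoint, lorentzB_comm x z, lorentzB_comm y z,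
    lorentzB_comm (lorentzCross x y) z, lorentzB_circleLinePoint_center c g hxx,
    lorentzB_circleLinePoint_line c g hyy, lorentzB_circleLinePoint_lorentzCross c g hxx hyy]
  field_simp
  linear_combination hg

lemma circleLinePoint_mem_hyperboloid (hx : x ∈ hyperboloid) (hy : y ∈ deSitter) (hc : 0 < c)
    (hg : g ^ 2 = c ^ 2 - 1 - lorentzB x y ^ 2) : circleLinePoint x y c g ∈ hyperboloid := by
  have hzz := lorentzB_circleLinePoint_self c g hx.1 hy hg
  refine ⟨hzz, pos_of_lorentzB_neg (by linarith [hx.1]) hx.2 (by linarith) ?_⟩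
  rw [lorentzB_circleLinePoint_center c g hx.1]
  linarith

lemma eq_circleLinePoint {z : Fin 3 → ℝ} (hxx : lorentzB x x = -1) (hyy : lorentzB y y = 1)
    (hzx : lorentzB z x = -c) (hzy : lorentzB z y = 0) :
    z = circleLinePoint x y c (lorentzB z (lorentzCross x y)) := by
  have h := lorentz_gram_smul_eq x y z
  rw [hxx, hyy, hzx, hzy] at h
  rw [circleLinePoint, eq_inv_smul_iff₀ (by positivity)]
  linear_combination (norm := module) -h

lemma lorentzB_lorentzCross_sq {z : Fin 3 → ℝ} (hxx : lorentzB x x = -1)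
    (hyy : lorentzB y y = 1) (hzz : lorentzB z z = -1) (hzx : lorentzB z x = -c)
    (hzy : lorentzB z y = 0) :
    lorentzB z (lorentzCross x y) ^ 2 = c ^ 2 - 1 - lorentzB x y ^ 2 := by
  have h := lorentzB_circleLinePoint (x := x) (y := y) c (lorentzB z (lorentzCross x y)) z
  rw [← eq_circleLinePoint c hxx hyy hzx hzy, hzz, lorentzB_comm x z, lorentzB_comm y z, hzx,
    hzy, lorentzB_comm (lorentzCross x y) z] at h
  field_simp at h
  linear_combination -h

end CircleLine

noncomputable def circleLineEquiv {x y : Fin 3 → ℝ} (hx : x ∈ hyperboloid)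
    (hy : y ∈ deSitter) {c : ℝ} (hc : 0 < c) :
    {z // z ∈ hyperboloid ∧ lorentzB z x = -c ∧ lorentzB z y = 0} ≃
      {g : ℝ // g ^ 2 = c ^ 2 - 1 - lorentzB x y ^ 2} where
  toFun z := ⟨lorentzB z.1 (lorentzCross x y),
    lorentzB_lorentzCross_sq c hx.1 hy z.2.1.1 z.2.2.1 z.2.2.2⟩
  invFun g := ⟨circleLinePoint x y c g, circleLinePoint_mem_hyperboloid c g hx hy hc g.2,
    lorentzB_circleLinePoint_center c g hx.1, lorentzB_circleLinePoint_line c g hy⟩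
  left_inv z := Subtype.ext (eq_circleLinePoint c hx.1 hy z.2.2.1 z.2.2.2).symm
  right_inv g := Subtype.ext (lorentzB_circleLinePoint_lorentzCross c g hx.1 hy)

theorem line_tangent_to_circle_iff_general
    (x y : Fin 3 → ℝ) (hx : x ∈ hyperboloid) (hy : y ∈ deSitter)
    (r : ℝ) :
    (∃! z : Fin 3 → ℝ, z ∈ hyperboloid ∧ lorentzB z x = -Real.cosh r ∧
        lorentzB z y = 0) ↔
      (lorentzB x y) ^ 2 = (Real.sinh r) ^ 2 := by
  rw [(circleLineEquiv hx hy (cosh_pos r)).existsUnique_subtype_congr, existsUnique_sq_eq_iff,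
    cosh_sq]
  constructor <;> intro h <;> linarith

theorem line_tangent_to_circle_iff
    (x y : Fin 3 → ℝ) (hx : x ∈ hyperboloid) (hy : y ∈ deSitter)
    (r : ℝ) (hr : 0 < r) :
    (∃! z : Fin 3 → ℝ, z ∈ hyperboloid ∧ lorentzB z x = -Real.cosh r ∧
        lorentzB z y = 0) ↔
      (lorentzB x y) ^ 2 = (Real.sinh r) ^ 2 :=
  line_tangent_to_circle_iff_general x y hx hy r
end

section
/- Let x ∈ L (the positive light cone) and y ∈ S²₁. Then B(x,y) = 0 if and only if x lies in the closure in ℝ³ of the set {t • z : t > 0, z ∈ H², B(z,y) = 0}. (Geometrically: the ideal point represented by the lightlike ray through x is an ideal endpoint of the geodesic line represented by y if and only if B(x,y) = 0.) -/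
/-- The positive light cone L = {x : B(x,x) = 0, x⁰ > 0}. -/
def lightCone : Set (Fin 3 → ℝ) :=
  {x | lorentzB x x = 0 ∧ 0 < x 0}

theorem ideal_endpoint_iff_lorentz_orthogonal
    (x y : Fin 3 → ℝ) (hx : x ∈ lightCone) (hy : y ∈ deSitter) :
    lorentzB x y = 0 ↔
      x ∈ closure {w : Fin 3 → ℝ | ∃ t : ℝ, 0 < t ∧ ∃ z : Fin 3 → ℝ,
        z ∈ hyperboloid ∧ lorentzB z y = 0 ∧ w = t • z} := by
  obtain ⟨hxx, hx0⟩ := hx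
  have hyy : lorentzB y y = 1 := hy
  simp only [lorentzB] at hxx hyy
  constructor
  · intro hxy
    have hxy' : -(x 0 * y 0) + x 1 * y 1 + x 2 * y 2 = 0 := hxy
    obtain ⟨b, hb0, hb1, hb2⟩ : ∃ b : Fin 3 → ℝ,
        b 0 = 1 + y 0 * y 0 ∧ b 1 = y 0 * y 1 ∧ b 2 = y 0 * y 2 :=
      ⟨fun i => if i = 0 then 1 + y 0 * y 0 else if i = 1 then y 0 * y 1 else y 0 * y 2,
        rfl, by simp, by simp⟩
    have hq : (0:ℝ) < 1 + y 0 * y 0 := by nlinarith [sq_nonneg (y 0)]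
    have hb0pos : 0 < b 0 := hb0 ▸ hq
    have key : ∀ ε : ℝ, 0 < ε → (x + ε • b) ∈ {w : Fin 3 → ℝ | ∃ t : ℝ, 0 < t ∧
        ∃ z : Fin 3 → ℝ, z ∈ hyperboloid ∧ lorentzB z y = 0 ∧ w = t • z} := by
      intro ε hε
      have hc2 : (0:ℝ) < 2 * ε * x 0 + ε ^ 2 * (1 + y 0 * y 0) := by positivity
      set c := Real.sqrt (2 * ε * x 0 + ε ^ 2 * (1 + y 0 * y 0)) with hc_def
      have hc : 0 < c := Real.sqrt_pos.2 hc2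
      have hcc : c * c = 2 * ε * x 0 + ε ^ 2 * (1 + y 0 * y 0) := Real.mul_self_sqrt hc2.le
      have hcinv : c * c⁻¹ = 1 := mul_inv_cancel₀ hc.ne'
      have huu : lorentzB (x + ε • b) (x + ε • b) = -(c * c) := by
        simp only [lorentzB, Pi.add_apply, Pi.smul_apply, smul_eq_mul, hb0, hb1, hb2, hcc]
        linear_combination hxx + 2 * ε * y 0 * hxy' + ε ^ 2 * y 0 ^ 2 * hyy
      refine ⟨c, hc, c⁻¹ • (x + ε • b), ⟨?_, ?_⟩, ?_, ?_⟩
      · show lorentzB _ _ = -1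
        simp only [lorentzB, Pi.smul_apply, Pi.add_apply, smul_eq_mul] at huu ⊢
        linear_combination (c⁻¹ * c⁻¹) * huu + (-(c * c⁻¹) - 1) * hcinv
      · show 0 < c⁻¹ * ((x + ε • b) 0)
        have h0 : (0:ℝ) < (x + ε • b) 0 := by
          simp only [Pi.add_apply, Pi.smul_apply, smul_eq_mul]
          positivity
        positivity
      · show lorentzB _ _ = 0
        simp only [lorentzB, Pi.smul_apply, Pi.add_apply, smul_eq_mul, hb0, hb1, hb2]
        linear_combination c⁻¹ * hxy' + c⁻¹ * ε * y 0 * hyy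
      · rw [smul_inv_smul₀ hc.ne']
    apply mem_closure_iff_seq_limit.2
    refine ⟨fun n => x + (1 / (n + 1 : ℝ)) • b, fun n => key _ (by positivity), ?_⟩
    have h1 : Filter.Tendsto (fun n : ℕ => (1 / (n + 1 : ℝ)) • b) Filter.atTop
        (nhds ((0:ℝ) • b)) :=
      tendsto_one_div_add_atTop_nhds_zero_nat.smul_const b
    have h2 := Filter.Tendsto.add (tendsto_const_nhds (x := x) (f := Filter.atTop (α := ℕ))) h1
    simpa using h2
  · intro hmem
    have hsub : {w : Fin 3 → ℝ | ∃ t : ℝ, 0 < t ∧ ∃ z : Fin 3 → ℝ,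
        z ∈ hyperboloid ∧ lorentzB z y = 0 ∧ w = t • z} ⊆ {w | lorentzB w y = 0} := by
      rintro w ⟨t, ht, z, hz, hzy, rfl⟩
      show lorentzB (t • z) y = 0
      simp only [lorentzB, Pi.smul_apply, smul_eq_mul] at hzy ⊢
      linear_combination t * hzy
    have hclosed : IsClosed {w : Fin 3 → ℝ | lorentzB w y = 0} := by
      have : Continuous fun w : Fin 3 → ℝ => lorentzB w y := by
        unfold lorentzB; fun_prop
      exact isClosed_eq this continuous_const
    exact closure_minimal hsub hclosed hmem
end
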